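/- Let p be an odd prime and c ∈ F_p with c ≠ ±2 and c^2 - 4 a nonzero square in F_p. Then the trinomial coefficient T(p-2,1), computed in F_p, equals -2/(c^2-4). -/

import Mathlib

/-!
Write `f = (X ^ 2 + c X + 1) ^ (p - 2)`, so that `T(p - 2, 1)` is the coefficient of `X ^ (p - 1)`
in `f`. Since `deg f < 2 (p - 1)`, summing `f` over `𝔽_p` kills every coefficient except that one:
`∑ₓ f(x) = -[X ^ (p - 1)] f`. By Fermat, `f(x) = (x ^ 2 + c x + 1)⁻¹`, and when `c ^ 2 - 4` is a
nonzero square the quadratic splits as `(x - α)(x - β)` with `α ≠ β`; partial fractions and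
`∑ₓ (x - t)⁻¹ = 0` then give `∑ₓ f(x) = 2 / (α - β) ^ 2 = 2 / (c ^ 2 - 4)`.
-/

/-- The trinomial coefficient: coefficient of `x^k` in `(x + c + x⁻¹)^n` over `R`. -/
noncomputable def triCoeff (R : Type*) [CommRing R] (c : R) (n : ℕ) (k : ℤ) : R :=
  (((LaurentPolynomial.T 1 + LaurentPolynomial.C c + LaurentPolynomial.T (-1)) ^ n :
      LaurentPolynomial R).coeff : ℤ →₀ R) k

open Polynomial
open scoped LaurentPolynomial
open LaurentPolynomial (T T_add T_pow mul_T_assoc coeff_toLaurent)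

theorem T_one_add_C_add_T_neg_one {R : Type*} [CommRing R] (c : R) :
    (T 1 + LaurentPolynomial.C c + T (-1) : R[T;T⁻¹]) =
      toLaurent (X ^ 2 + C c * X + 1) * T (-1) := by
  simp only [map_add, map_mul, map_one, toLaurent_X_pow, toLaurent_C,
    toLaurent_X, add_mul, mul_T_assoc, one_mul, ← T_add]
  norm_num

theorem triCoeff_eq_coeff {R : Type*} [CommRing R] (c : R) (n k : ℕ) :
    triCoeff R c n k = ((X ^ 2 + C c * X + 1) ^ n).coeff (n + k) := by
  rw [triCoeff, T_one_add_C_add_T_neg_one, mul_pow, T_pow, ← map_pow]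
  erw [AddMonoidAlgebra.coeff_mul_single_apply]
  rw [mul_one, coeff_toLaurent, show (k : ℤ) + -(n * -1) = Nat.castEmbedding (n + k) by simp; ring,
    Finsupp.mapDomain_apply Nat.castEmbedding.injective]
  rfl

open Finset FiniteField

section Field

variable {K : Type*} [Field K]

/-- The indicator terms correct the partial fraction decomposition at the poles, where `0⁻¹ = 0`. -/
theorem inv_sub_mul_sub [DecidableEq K] {α β : K} (h : α ≠ β) (x : K) :
    ((x - α) * (x - β))⁻¹ = (α - β)⁻¹ * ((x - α)⁻¹ - (x - β)⁻¹) +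
      ((if x = α then ((α - β) ^ 2)⁻¹ else 0) + (if x = β then ((α - β) ^ 2)⁻¹ else 0)) := by
  have hαβ : α - β ≠ 0 := sub_ne_zero.2 h
  by_cases hxα : x = α
  · rw [hxα, if_pos rfl, if_neg h, sub_self, zero_mul, inv_zero]
    field_simp
    ring
  by_cases hxβ : x = β
  · rw [hxβ, if_pos rfl, if_neg h.symm, sub_self, mul_zero, inv_zero, ← neg_sub α β]
    field_simp
    ring
  rw [if_neg hxα, if_neg hxβ]
  have := sub_ne_zero.2 hxα
  have := sub_ne_zero.2 hxβ
  field_simp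
  ring

variable [Fintype K]

local notation "q" => Fintype.card K

theorem pow_card_sub_two_eq_inv (hq : q ≠ 2) (a : K) : a ^ (q - 2) = a⁻¹ := by
  have hq2 : 2 < q := lt_of_le_of_ne Fintype.one_lt_card (Ne.symm hq)
  rcases eq_or_ne a 0 with rfl | ha
  · rw [zero_pow (by omega), inv_zero]
  · refine (eq_inv_of_mul_eq_one_right ?_)
    rw [← pow_succ', show q - 2 + 1 = q - 1 by omega, pow_card_sub_one_eq_one a ha]

theorem sum_inv_sub (hq : q ≠ 2) (t : K) : ∑ x : K, (x - t)⁻¹ = 0 := by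
  rw [Fintype.sum_equiv (Equiv.subRight t) (fun x ↦ (x - t)⁻¹) (·⁻¹) fun _ ↦ rfl]
  simp_rw [← pow_card_sub_two_eq_inv hq]
  exact sum_pow_lt_card_sub_one K _ (by have := Fintype.one_lt_card (α := K); omega)

theorem sum_pow_card_sub_one : ∑ x : K, x ^ (q - 1) = -1 := by
  classical
  have h (x : K) : x ^ (q - 1) = 1 - if x = 0 then 1 else 0 := by
    split_ifs with hx
    · rw [hx, zero_pow (by have := Fintype.one_lt_card (α := K); omega), sub_self]
    · rw [pow_card_sub_one_eq_one x hx, sub_zero]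
  simp [h, sum_sub_distrib]

theorem sum_pow_of_card_sub_one_lt {i : ℕ} (hi : q - 1 < i) (hi' : i < 2 * (q - 1)) :
    ∑ x : K, x ^ i = 0 := by
  have h (x : K) : x ^ i = x ^ (i - q + 1) := by
    calc x ^ i = x ^ (i - q) * x ^ q := by rw [← pow_add, Nat.sub_add_cancel (by omega)]
      _ = x ^ (i - q + 1) := by rw [pow_card, pow_succ]
  simp_rw [h]
  exact sum_pow_lt_card_sub_one K _ (by omega)

theorem sum_pow_of_lt {i : ℕ} (hi : i < 2 * (q - 1)) :
    ∑ x : K, x ^ i = if i = q - 1 then -1 else 0 := by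
  rcases lt_trichotomy i (q - 1) with h | rfl | h
  · rw [sum_pow_lt_card_sub_one K i h, if_neg h.ne]
  · rw [sum_pow_card_sub_one, if_pos rfl]
  · rw [sum_pow_of_card_sub_one_lt h hi, if_neg h.ne']

theorem sum_eval_eq_neg_coeff {f : K[X]} (hf : f.natDegree < 2 * (q - 1)) :
    ∑ x : K, f.eval x = -f.coeff (q - 1) := by
  have hq : q - 1 < 2 * (q - 1) := by have := Fintype.one_lt_card (α := K); omega
  calc ∑ x : K, f.eval x
      = ∑ i ∈ range (2 * (q - 1)), f.coeff i * ∑ x : K, x ^ i := by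
        simp_rw [eval_eq_sum_range' hf, mul_sum]
        exact sum_comm
    _ = ∑ i ∈ range (2 * (q - 1)), if i = q - 1 then -f.coeff i else 0 := by
        refine sum_congr rfl fun i hi ↦ ?_
        rw [sum_pow_of_lt (mem_range.1 hi)]
        split_ifs <;> simp
    _ = -f.coeff (q - 1) := by rw [sum_ite_eq', if_pos (mem_range.2 hq)]

theorem sum_inv_sub_mul_sub [DecidableEq K] (hq : q ≠ 2) {α β : K} (h : α ≠ β) :
    ∑ x : K, ((x - α) * (x - β))⁻¹ = 2 / (α - β) ^ 2 := by
  simp_rw [inv_sub_mul_sub h, sum_add_distrib, ← mul_sum, sum_sub_distrib, sum_inv_sub hq,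
    sum_ite_eq', mem_univ, if_true]
  ring

theorem sum_inv_sq_add_mul_add_one (h2 : (2 : K) ≠ 0) {c : K} (hsq : IsSquare (c ^ 2 - 4))
    (hne : c ^ 2 - 4 ≠ 0) : ∑ x : K, (x ^ 2 + c * x + 1)⁻¹ = 2 / (c ^ 2 - 4) := by
  classical
  obtain ⟨r, hr⟩ := hsq
  have hq : q ≠ 2 := fun hq ↦ h2 (by simpa [hq] using cast_card_eq_zero K)
  have hfactor (x : K) : x ^ 2 + c * x + 1 = (x - (-c + r) / 2) * (x - (-c - r) / 2) := by
    field_simp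
    linear_combination (-1 : K) * hr
  have hroots : (-c + r) / 2 - (-c - r) / 2 = r := by field_simp; ring
  have hr0 : r ≠ 0 := by rintro rfl; exact hne (by rw [hr, mul_zero])
  simp_rw [hfactor, sum_inv_sub_mul_sub hq (sub_ne_zero.1 (hroots ▸ hr0)), hroots, hr, sq]

end Field

theorem tri_p_sub_two_one_sq_general (p : ℕ) [Fact p.Prime] (hp : p ≠ 2) (c : ZMod p)
    (hsq : IsSquare (c ^ 2 - 4)) (hne : c ^ 2 - 4 ≠ 0) :
    triCoeff (ZMod p) c (p - 2) 1 = -2 / (c ^ 2 - 4) := by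
  have hp3 : 3 ≤ p := by have := (Fact.out : p.Prime).two_le; omega
  have h2 : (2 : ZMod p) ≠ 0 := Ring.two_ne_zero (by rwa [ZMod.ringChar_zmod_n])
  set f : (ZMod p)[X] := (X ^ 2 + C c * X + 1) ^ (p - 2)
  have hdeg : f.natDegree < 2 * (Fintype.card (ZMod p) - 1) := by
    have hquad : (X ^ 2 + C c * X + 1 : (ZMod p)[X]).natDegree ≤ 2 := by compute_degree
    rw [ZMod.card]
    exact (natDegree_pow_le_of_le _ hquad).trans_lt (by omega)
  have hsum : ∑ x : ZMod p, f.eval x = 2 / (c ^ 2 - 4) := by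
    simp only [f, eval_pow, eval_add, eval_mul, eval_C, eval_X, eval_one]
    have hinv := pow_card_sub_two_eq_inv (K := ZMod p) (by rwa [ZMod.card])
    rw [ZMod.card] at hinv
    simp_rw [hinv]
    exact sum_inv_sq_add_mul_add_one h2 hsq hne
  have hcoeff := sum_eval_eq_neg_coeff hdeg
  rw [hsum, ZMod.card] at hcoeff
  rw [show (1 : ℤ) = (1 : ℕ) from rfl, triCoeff_eq_coeff, show p - 2 + 1 = p - 1 by omega,
    neg_div, hcoeff, neg_neg]

theorem tri_p_sub_two_one_sq (p : ℕ) [Fact p.Prime] (hp : p ≠ 2) (c : ZMod p)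
    (hc2 : c ≠ 2) (hc2' : c ≠ -2) (hsq : IsSquare (c ^ 2 - 4)) (hne : c ^ 2 - 4 ≠ 0) :
    triCoeff (ZMod p) c (p - 2) 1 = -2 / (c ^ 2 - 4) :=
  tri_p_sub_two_one_sq_general p hp c hsq hne
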